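/- Let A, B ∈ ℂ^{n×n} satisfy AᵀB - BᵀA = 0 and A*B + B*A = 2·Id. Then A is invertible. -/
import Mathlib


open Matrix

/-- admissible pairs `(A,B)` have `A` invertible. -/
theorem stmt7 (n : ℕ) (A B : Matrix (Fin n) (Fin n) ℂ)
    (h1 : Aᵀ * B - Bᵀ * A = 0)
    (h2 : Aᴴ * B + Bᴴ * A = (2 : ℂ) • (1 : Matrix (Fin n) (Fin n) ℂ)) :
    IsUnit A := by
  rw [Matrix.isUnit_iff_isUnit_det, isUnit_iff_ne_zero]
  intro hdet
  obtain ⟨v, hv, hAv⟩ := (Matrix.exists_mulVec_eq_zero_iff).2 hdet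
  have key : (2 : ℂ) * (star v ⬝ᵥ v) = 0 := by
    have := congrArg (fun M => star v ⬝ᵥ (M *ᵥ v)) h2
    simp only [Matrix.add_mulVec, Matrix.smul_mulVec, Matrix.one_mulVec,
      dotProduct_add, dotProduct_smul, smul_eq_mul] at this
    rw [← this, ← Matrix.mulVec_mulVec, ← Matrix.mulVec_mulVec, hAv,
      Matrix.mulVec_zero, dotProduct_zero, add_zero]
    rw [Matrix.dotProduct_mulVec, ← Matrix.star_mulVec, hAv]
    simp
  have : star v ⬝ᵥ v = 0 := by
    have h2ne : (2 : ℂ) ≠ 0 := two_ne_zero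
    exact (mul_eq_zero.1 key).resolve_left h2ne
  apply hv
  funext i
  have hsum : ∑ j, Complex.normSq (v j) = 0 := by
    have := congrArg Complex.re this
    simpa [dotProduct, Complex.mul_re, Complex.normSq_apply] using this
  have : Complex.normSq (v i) = 0 :=
    (Finset.sum_eq_zero_iff_of_nonneg (fun j _ => Complex.normSq_nonneg _)).1 hsum i
      (Finset.mem_univ i)
  simpa using Complex.normSq_eq_zero.1 this
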